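/- Let c ≥ 2 and let Φ : 𝒞(ℝ^c) → 𝒞(ℝ^d) be a non-trivial lattice homomorphism with Φ(∅) = ∅. Then dim C ≤ dim Φ(C) for every C ∈ 𝒞(ℝ^c); in particular c ≤ d. -/

import Mathlib

open Set

noncomputable section

/-- Euclidean space `ℝ^n`. -/
abbrev E (n : ℕ) := EuclideanSpace ℝ (Fin n)

/-- A convex body of `ℝ^n`: a compact convex subset (possibly empty). -/
def IsBody {n : ℕ} (C : Set (E n)) : Prop := Convex ℝ C ∧ IsCompact C

/-- `Φ` represents a lattice homomorphism from `𝒞(ℝ^c)` to `𝒞(ℝ^d)`: it maps convex bodies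
to convex bodies, and on convex bodies it preserves intersections (the lattice meet) and
convex hulls of unions (the lattice join). -/
def IsLatHom {c d : ℕ} (Φ : Set (E c) → Set (E d)) : Prop :=
  (∀ C, IsBody C → IsBody (Φ C)) ∧
  ∀ C D : Set (E c), IsBody C → IsBody D →
    Φ (C ∩ D) = Φ C ∩ Φ D ∧ Φ (convexHull ℝ (C ∪ D)) = convexHull ℝ (Φ C ∪ Φ D)

/-- `Φ` is non-trivial: it is not constant on convex bodies. -/
def NonTrivial {c d : ℕ} (Φ : Set (E c) → Set (E d)) : Prop :=
  ∃ C D : Set (E c), IsBody C ∧ IsBody D ∧ Φ C ≠ Φ D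

/-- The closed ray emanating from `o` in direction `u`. -/
def Ray {n : ℕ} (o u : E n) : Set (E n) := {p | ∃ t : ℝ, 0 ≤ t ∧ p = o + t • u}

/-- An affine hyperplane of `ℝ^n`: a nonempty affine subspace of dimension `n - 1`. -/
def IsHyperplane {n : ℕ} (H : AffineSubspace ℝ (E n)) : Prop :=
  (H : Set (E n)).Nonempty ∧ Module.finrank ℝ H.direction + 1 = n

open scoped Classical in
/-- The dimension of a convex set: the dimension of its affine hull, with `sdim ∅ = -1`. -/
def sdim {n : ℕ} (s : Set (E n)) : ℤ :=
  if s = ∅ then -1 else Module.finrank ℝ (affineSpan ℝ s).direction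

/-!
Non-triviality and `Φ ∅ = ∅` force `Φ {x} ≠ ∅` for every point `x`: otherwise reflection in a
point shows that every point, hence every polytope, hence every body (each lies in a polytope)
is mapped to `∅`. Now let `C` have dimension `k` and pick a `k`-simplex in `C` spanning its
affine hull. Its `k + 1` facets have empty intersection, while any `k` of them share a vertex `v`,
so their images share the nonempty set `Φ {v}`. Since `Φ` preserves finite intersections, the
images of all facets have empty intersection, and Helly's theorem in the affine hull of `Φ C`
gives `k + 1 ≤ dim Φ C + 1`. Taking `C` a ball yields `c ≤ d`.
-/

open Module
open scoped Finset

theorem Bornology.IsBounded.exists_finite_subset_convexHull {V : Type*} [NormedAddCommGroup V]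
    [NormedSpace ℝ V] [FiniteDimensional ℝ V] {s : Set V} (hs : IsBounded s) :
    ∃ t : Set V, t.Finite ∧ s ⊆ convexHull ℝ t := by
  let e := (Module.finBasis ℝ V).equivFun.toContinuousLinearEquiv
  obtain ⟨r, hr, hsr⟩ :=
    ((e : V →L[ℝ] Fin (finrank ℝ V) → ℝ).lipschitz.isBounded_image hs).subset_closedBall_lt 0 0
  have hcube : Metric.closedBall (0 : Fin (finrank ℝ V) → ℝ) r
      = convexHull ℝ (Set.univ.pi fun _ ↦ {-r, r}) := by
    rw [closedBall_pi _ hr.le, convexHull_pi]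
    refine Set.pi_congr rfl fun _ _ ↦ ?_
    rw [convexHull_pair, segment_eq_Icc (by linarith), Real.closedBall_eq_Icc, Pi.zero_apply,
      zero_sub, zero_add]
  let f : (Fin (finrank ℝ V) → ℝ) →ₗ[ℝ] V := e.symm.toLinearEquiv.toLinearMap
  refine ⟨f '' Set.univ.pi fun _ ↦ {-r, r},
    (Set.Finite.pi fun _ ↦ (Set.finite_singleton r).insert (-r)).image _, ?_⟩
  rw [← f.image_convexHull, ← hcube]
  intro x hx
  exact ⟨e x, hsr ⟨x, hx, rfl⟩, e.symm_apply_apply x⟩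

section Helly

variable {𝕜 V ι : Type*} [Field 𝕜] [LinearOrder 𝕜] [IsStrictOrderedRing 𝕜]
  [AddCommGroup V] [Module 𝕜 V]

theorem Convex.helly_theorem_of_subset_affineSubspace [FiniteDimensional 𝕜 V]
    {A : AffineSubspace 𝕜 V} {F : ι → Set V} {s : Finset ι}
    (h_convex : ∀ i ∈ s, Convex 𝕜 (F i)) (h_sub : ∀ i ∈ s, F i ⊆ A)
    (h_inter : ∀ I ⊆ s, #I ≤ finrank 𝕜 A.direction + 1 → (⋂ i ∈ I, F i).Nonempty) :
    (⋂ i ∈ s, F i).Nonempty := by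
  rcases s.eq_empty_or_nonempty with rfl | ⟨i, hi⟩
  · simp
  obtain ⟨p, hp⟩ : (F i).Nonempty := by
    simpa using h_inter {i} (by simpa) (by simp)
  have hpA : p ∈ A := h_sub i hi hp
  -- Helly's theorem applies to the translates `F j - p`, viewed inside `A.direction`.
  let G : ι → Set A.direction := fun j ↦ A.direction.subtype ⁻¹' ((p + ·) ⁻¹' F j)
  have hG (I : Finset ι) :
      ⋂ j ∈ I, G j = A.direction.subtype ⁻¹' ((p + ·) ⁻¹' ⋂ j ∈ I, F j) := by
    simp only [G, Set.preimage_iInter₂]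
  obtain ⟨v, hv⟩ := Convex.helly_theorem' (F := G) (s := s)
    (fun j hj ↦ ((h_convex j hj).translate_preimage_right p).linear_preimage _) fun I hIs hI ↦ by
      rcases I.eq_empty_or_nonempty with rfl | ⟨j, hj⟩
      · simp
      obtain ⟨x, hx⟩ := h_inter I hIs hI
      have hxA : x ∈ A := h_sub j (hIs hj) (Set.mem_iInter₂.1 hx j hj)
      refine ⟨⟨x - p, AffineSubspace.vsub_mem_direction hxA hpA⟩, ?_⟩
      rw [hG]
      simpa using hx
  rw [hG] at hv
  exact ⟨_, hv⟩

theorem card_le_finrank_direction_add_one_of_biInter_eq_empty [FiniteDimensional 𝕜 V]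
    {A : AffineSubspace 𝕜 V} {F : ι → Set V} {s : Finset ι}
    (h_convex : ∀ i ∈ s, Convex 𝕜 (F i)) (h_sub : ∀ i ∈ s, F i ⊆ A)
    (h_inter : ∀ I ⊆ s, #I < #s → (⋂ i ∈ I, F i).Nonempty) (h_empty : ⋂ i ∈ s, F i = ∅) :
    #s ≤ finrank 𝕜 A.direction + 1 := by
  by_contra! h
  have := Convex.helly_theorem_of_subset_affineSubspace h_convex h_sub fun I hIs hI ↦
    h_inter I hIs (by omega)
  rw [h_empty] at this
  exact Set.not_nonempty_empty this

theorem AffineIndependent.biInter_convexHull_erase [DecidableEq V] {s : Finset V}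
    (hs : AffineIndependent 𝕜 ((↑) : s → V)) {u : Finset V} (hu : u.Nonempty) (hus : u ⊆ s) :
    ⋂ a ∈ u, convexHull 𝕜 (s.erase a : Set V) = convexHull 𝕜 ((s \ u : Finset V) : Set V) := by
  induction hu using Finset.Nonempty.cons_induction with
  | singleton a => simp
  | cons a u ha hu ih =>
    rw [Finset.cons_eq_insert, Finset.set_biInter_insert, ih ((Finset.subset_insert a u).trans
      (by simpa [Finset.cons_eq_insert] using hus)), ← hs.convexHull_inter (Finset.erase_subset a s)
      Finset.sdiff_subset, ← Finset.coe_inter, Finset.erase_inter,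
      Finset.inter_eq_right.2 Finset.sdiff_subset, Finset.sdiff_insert]

end Helly

section Dimension

variable {n : ℕ}

theorem sdim_empty : sdim (∅ : Set (E n)) = -1 := if_pos rfl

theorem sdim_of_nonempty {s : Set (E n)} (hs : s.Nonempty) :
    sdim s = finrank ℝ (affineSpan ℝ s).direction :=
  if_neg hs.ne_empty

theorem sdim_le (s : Set (E n)) : sdim s ≤ n := by
  rcases s.eq_empty_or_nonempty with rfl | hs
  · rw [sdim_empty]; omega
  · rw [sdim_of_nonempty hs]
    exact_mod_cast (Submodule.finrank_le _).trans finrank_euclideanSpace_fin.le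

theorem sdim_closedBall (x : E n) {r : ℝ} (hr : 0 < r) : sdim (Metric.closedBall x r) = n := by
  have hspan : affineSpan ℝ (Metric.closedBall x r) = ⊤ :=
    affineSpan_eq_top_of_nonempty_interior ⟨x, interior_mono (subset_convexHull ℝ _)
      (Metric.ball_subset_interior_closedBall (Metric.mem_ball_self hr))⟩
  rw [sdim_of_nonempty (Metric.nonempty_closedBall.2 hr.le), hspan,
    AffineSubspace.direction_top, finrank_top, finrank_euclideanSpace_fin]

end Dimension

namespace IsBody

variable {n : ℕ}

theorem singleton (x : E n) : IsBody ({x} : Set (E n)) := ⟨convex_singleton x, isCompact_singleton⟩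

theorem closedBall (x : E n) (r : ℝ) : IsBody (Metric.closedBall x r) :=
  ⟨convex_closedBall x r, isCompact_closedBall x r⟩

theorem convexHull_of_finite {s : Set (E n)} (hs : s.Finite) : IsBody (convexHull ℝ s) :=
  ⟨convex_convexHull ℝ s, hs.isCompact_convexHull ℝ⟩

theorem inter {C D : Set (E n)} (hC : IsBody C) (hD : IsBody D) : IsBody (C ∩ D) :=
  ⟨hC.1.inter hD.1, hC.2.inter_right hD.2.isClosed⟩

theorem biInter {ι : Type*} {F : ι → Set (E n)} {s : Finset ι} (hs : s.Nonempty)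
    (hF : ∀ i ∈ s, IsBody (F i)) : IsBody (⋂ i ∈ s, F i) := by
  classical
  induction hs using Finset.Nonempty.cons_induction with
  | singleton a => simpa using hF a (Finset.mem_singleton_self a)
  | cons a u ha hu ih =>
    simp only [Finset.mem_cons, forall_eq_or_imp] at hF
    rw [Finset.cons_eq_insert, Finset.set_biInter_insert]
    exact hF.1.inter (ih hF.2)

end IsBody

namespace IsLatHom

variable {c d : ℕ} {Φ : Set (E c) → Set (E d)} (hΦ : IsLatHom Φ)
include hΦ

theorem isBody {C : Set (E c)} (hC : IsBody C) : IsBody (Φ C) := hΦ.1 C hC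

theorem map_inter {C D : Set (E c)} (hC : IsBody C) (hD : IsBody D) :
    Φ (C ∩ D) = Φ C ∩ Φ D :=
  (hΦ.2 C D hC hD).1

theorem map_convexHull_union {C D : Set (E c)} (hC : IsBody C) (hD : IsBody D) :
    Φ (convexHull ℝ (C ∪ D)) = convexHull ℝ (Φ C ∪ Φ D) :=
  (hΦ.2 C D hC hD).2

theorem map_mono {C D : Set (E c)} (hC : IsBody C) (hD : IsBody D) (h : C ⊆ D) : Φ C ⊆ Φ D := by
  rw [← inter_eq_left.2 h, hΦ.map_inter hC hD]
  exact inter_subset_right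

theorem map_biInter {ι : Type*} {F : ι → Set (E c)} {s : Finset ι} (hs : s.Nonempty)
    (hF : ∀ i ∈ s, IsBody (F i)) : Φ (⋂ i ∈ s, F i) = ⋂ i ∈ s, Φ (F i) := by
  classical
  induction hs using Finset.Nonempty.cons_induction with
  | singleton a => simp
  | cons a u ha hu ih =>
    simp only [Finset.mem_cons, forall_eq_or_imp] at hF
    simp only [Finset.cons_eq_insert, Finset.set_biInter_insert]
    rw [hΦ.map_inter hF.1 (IsBody.biInter hu hF.2), ih hF.2]

variable (hempty : Φ ∅ = ∅)
include hempty

-- `y` is the midpoint of `x` and its mirror image `z`, so `Φ {y} ⊆ Φ [x, z] = Φ {z}`,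
-- while `Φ {y}` and `Φ {z}` are disjoint.
theorem map_singleton_eq_empty {x : E c} (hx : Φ {x} = ∅) (y : E c) : Φ {y} = ∅ := by
  rcases eq_or_ne y x with rfl | hne
  · exact hx
  set z := AffineEquiv.pointReflection ℝ y x
  have hmid : midpoint ℝ x z = y := midpoint_eq_iff.2 rfl
  have hyz : y ≠ z := by
    intro h
    rw [← h, midpoint_eq_right_iff] at hmid
    exact hne hmid.symm
  have hsegment : Φ (convexHull ℝ ({x} ∪ {z})) = Φ {z} := by
    rw [hΦ.map_convexHull_union (.singleton x) (.singleton z), hx, empty_union,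
      (hΦ.isBody (.singleton z)).1.convexHull_eq]
  have hsub : Φ {y} ⊆ Φ {z} := by
    rw [← hsegment]
    refine hΦ.map_mono (.singleton y) (.convexHull_of_finite (toFinite _)) ?_
    rw [singleton_subset_iff, singleton_union, convexHull_pair, ← hmid]
    exact midpoint_mem_segment x z
  have hdisj : Φ {y} ∩ Φ {z} = ∅ := by
    rw [← hΦ.map_inter (.singleton y) (.singleton z),
      singleton_inter_eq_empty.2 (notMem_singleton_iff.2 hyz), hempty]
  rwa [inter_eq_left.2 hsub] at hdisj

theorem map_convexHull_eq_empty (hpt : ∀ x, Φ {x} = ∅) {s : Set (E c)} (hs : s.Finite) :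
    Φ (convexHull ℝ s) = ∅ := by
  induction s, hs using Set.Finite.induction_on with
  | empty => rwa [convexHull_empty]
  | @insert a t _ ht ih =>
    rw [insert_eq, ← convexHull_convexHull_union_right,
      hΦ.map_convexHull_union (.singleton a) (.convexHull_of_finite ht), hpt, ih, union_self,
      convexHull_empty]

theorem map_singleton_nonempty (hnt : NonTrivial Φ) (x : E c) : (Φ {x}).Nonempty := by
  by_contra! hx
  have hpt := hΦ.map_singleton_eq_empty hempty hx
  have hbody {C : Set (E c)} (hC : IsBody C) : Φ C = ∅ := by
    obtain ⟨t, ht, hCt⟩ := hC.2.isBounded.exists_finite_subset_convexHull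
    refine subset_empty_iff.1 ?_
    rw [← hΦ.map_convexHull_eq_empty hempty hpt ht]
    exact hΦ.map_mono hC (.convexHull_of_finite ht) hCt
  obtain ⟨C, D, hC, hD, hCD⟩ := hnt
  exact hCD ((hbody hC).trans (hbody hD).symm)

theorem finrank_direction_affineSpan_le (hnt : NonTrivial Φ) {C : Set (E c)} (hC : IsBody C)
    (hne : C.Nonempty) :
    finrank ℝ (affineSpan ℝ C).direction ≤ finrank ℝ (affineSpan ℝ (Φ C)).direction := by
  classical
  obtain ⟨t, htC, htspan, htind⟩ := exists_affineIndependent ℝ (E c) C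
  obtain ⟨s, rfl⟩ := (finite_set_of_fin_dim_affineIndependent ℝ htind).exists_finset_coe
  have hs : s.Nonempty := by
    rw [← Finset.coe_nonempty, ← affineSpan_nonempty (k := ℝ), htspan, affineSpan_nonempty]
    exact hne
  have hcard : finrank ℝ (affineSpan ℝ C).direction + 1 = #s := by
    have : Nonempty (s : Set (E c)) := hs.to_subtype
    rw [← htspan, direction_affineSpan, ← Subtype.range_coe (s := (s : Set (E c))),
      htind.finrank_vectorSpan_add_one]
    simp
  let F : E c → Set (E c) := fun a ↦ convexHull ℝ (s.erase a : Set (E c))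
  have hF (a : E c) : IsBody (F a) := .convexHull_of_finite (s.erase a).finite_toSet
  have hFC (a : E c) : F a ⊆ C :=
    convexHull_min ((Finset.coe_subset.2 (s.erase_subset a)).trans htC) hC.1
  have hinter : ∀ I ⊆ s, #I < #s → (⋂ i ∈ I, Φ (F i)).Nonempty := by
    intro I hIs hI
    obtain ⟨b, hbs, hbI⟩ := Finset.exists_mem_notMem_of_card_lt_card hI
    refine (hΦ.map_singleton_nonempty hempty hnt b).mono (subset_iInter₂ fun i hi ↦ ?_)
    refine hΦ.map_mono (.singleton b) (hF i) (singleton_subset_iff.2 (subset_convexHull ℝ _ ?_))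
    exact Finset.mem_erase.2 ⟨fun h ↦ hbI (h ▸ hi), hbs⟩
  have hempty_inter : ⋂ i ∈ s, Φ (F i) = ∅ := by
    rw [← hΦ.map_biInter hs fun i _ ↦ hF i, htind.biInter_convexHull_erase hs subset_rfl,
      Finset.sdiff_self, Finset.coe_empty, convexHull_empty, hempty]
  have hbound := card_le_finrank_direction_add_one_of_biInter_eq_empty (A := affineSpan ℝ (Φ C))
    (fun i _ ↦ (hΦ.isBody (hF i)).1)
    (fun i _ ↦ (hΦ.map_mono (hF i) hC (hFC i)).trans (subset_affineSpan ℝ _)) hinter hempty_inter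
  omega

theorem sdim_le_sdim (hnt : NonTrivial Φ) {C : Set (E c)} (hC : IsBody C) :
    sdim C ≤ sdim (Φ C) := by
  rcases C.eq_empty_or_nonempty with rfl | hne
  · rw [hempty, sdim_empty, sdim_empty]
  obtain ⟨x, hx⟩ := hne
  obtain ⟨y, hy⟩ := hΦ.map_singleton_nonempty hempty hnt x
  rw [sdim_of_nonempty ⟨x, hx⟩,
    sdim_of_nonempty ⟨y, hΦ.map_mono (.singleton x) hC (singleton_subset_iff.2 hx) hy⟩]
  exact_mod_cast hΦ.finrank_direction_affineSpan_le hempty hnt hC ⟨x, hx⟩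

end IsLatHom

theorem stmt_8_general (c d : ℕ) (Φ : Set (E c) → Set (E d))
    (hΦ : IsLatHom Φ) (hnt : NonTrivial Φ) (hempty : Φ (∅ : Set (E c)) = ∅) :
    (∀ C : Set (E c), IsBody C → sdim C ≤ sdim (Φ C)) ∧ c ≤ d := by
  have hdim (C : Set (E c)) (hC : IsBody C) : sdim C ≤ sdim (Φ C) :=
    hΦ.sdim_le_sdim hempty hnt hC
  refine ⟨hdim, ?_⟩
  have hball := hdim _ (IsBody.closedBall 0 1)
  rw [sdim_closedBall 0 one_pos] at hball
  have hle := sdim_le (Φ (Metric.closedBall 0 1))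
  omega

/-- A non-trivial lattice homomorphism `𝒞(ℝ^c) → 𝒞(ℝ^d)`, `c ≥ 2`, with `Φ(∅) = ∅` does
not lower dimensions; in particular `c ≤ d`. -/
theorem stmt_8 (c d : ℕ) (hc : 2 ≤ c) (Φ : Set (E c) → Set (E d))
    (hΦ : IsLatHom Φ) (hnt : NonTrivial Φ) (hempty : Φ (∅ : Set (E c)) = ∅) :
    (∀ C : Set (E c), IsBody C → sdim C ≤ sdim (Φ C)) ∧ c ≤ d :=
  stmt_8_general c d Φ hΦ hnt hempty
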